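/- For 0 ≤ a < 1 and s ≥ 1, the function f_a(s) = Σ_{k=0}^{∞} (s^k/k!) · (s/(k+1))^a satisfies e^s (1 - 2/e) ≤ f_a(s) ≤ 2 e^s. -/

import Mathlib

/-!
Write `E k = s ^ k / k!`, so that `∑ E k = exp s` and the `k`-th term of `f_a(s)` is
`E k * x ^ a` with `x = s / (k + 1)` and `E k * x = E (k + 1)`. For `0 ≤ a ≤ 1` we have
`x ^ a ≤ 1 + x`, which bounds the sum by `∑ (E k + E (k + 1)) ≤ 2 exp s`. Conversely
`x ^ a ≥ 1` when `k + 1 ≤ s` and `x ^ a ≥ x` when `s ≤ k + 1`; with `m = ⌊s⌋` this bounds the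
sum below by `∑_{k ≠ m} E k = exp s - E m`. Finally `E m + E (m + 1) ≤ exp s` and
`E (m + 1) ≥ E m / 2`, so `E m ≤ (2/3) exp s ≤ (2/e) exp s`.
-/

open Real Finset Nat

lemma Real.rpow_le_one_add {x a : ℝ} (hx : 0 ≤ x) (ha0 : 0 ≤ a) (ha1 : a ≤ 1) :
    x ^ a ≤ 1 + x := by
  rcases le_total x 1 with h | h
  · linarith [rpow_le_one hx h ha0]
  · linarith [rpow_le_self_of_one_le h ha1]

noncomputable def expTerm (s : ℝ) (k : ℕ) : ℝ := s ^ k / k !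

noncomputable def weightedExpTerm (a s : ℝ) (k : ℕ) : ℝ := expTerm s k * (s / (k + 1)) ^ a

section

variable {a s : ℝ}

lemma expTerm_nonneg (hs : 0 ≤ s) (k : ℕ) : 0 ≤ expTerm s k := by
  unfold expTerm; positivity

lemma expTerm_mul_div_succ (s : ℝ) (k : ℕ) : expTerm s k * (s / (k + 1)) = expTerm s (k + 1) := by
  simp only [expTerm, factorial_succ, cast_mul, cast_succ, pow_succ]
  field_simp

lemma hasSum_expTerm (s : ℝ) : HasSum (expTerm s) (exp s) := by
  rw [exp_eq_exp_ℝ]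
  exact NormedSpace.expSeries_div_hasSum_exp s

lemma hasSum_expTerm_succ (s : ℝ) : HasSum (fun k ↦ expTerm s (k + 1)) (exp s - 1) := by
  simpa [expTerm] using (hasSum_nat_add_iff' 1).mpr (hasSum_expTerm s)

lemma expTerm_add_expTerm_succ_le_exp (hs : 0 ≤ s) (m : ℕ) :
    expTerm s m + expTerm s (m + 1) ≤ exp s := by
  have h := (hasSum_expTerm s).summable.sum_le_tsum (range (m + 2))
    (fun k _ ↦ expTerm_nonneg hs k)
  rw [(hasSum_expTerm s).tsum_eq, sum_range_succ, sum_range_succ] at h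
  linarith [sum_nonneg fun k (_ : k ∈ range m) ↦ expTerm_nonneg hs k]

lemma expTerm_le_two_thirds_exp (hs : 0 ≤ s) {m : ℕ} (hm : (m : ℝ) + 1 ≤ 2 * s) :
    expTerm s m ≤ 2 / 3 * exp s := by
  have hratio : 1 / 2 ≤ s / (m + 1) := by
    rw [le_div_iff₀ (by positivity)]; linarith
  have hhalf : expTerm s m * (1 / 2) ≤ expTerm s (m + 1) := by
    rw [← expTerm_mul_div_succ]
    exact mul_le_mul_of_nonneg_left hratio (expTerm_nonneg hs m)
  linarith [expTerm_add_expTerm_succ_le_exp hs m]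

lemma weightedExpTerm_nonneg (hs : 0 ≤ s) (k : ℕ) : 0 ≤ weightedExpTerm a s k :=
  mul_nonneg (expTerm_nonneg hs k) (rpow_nonneg (by positivity) a)

lemma weightedExpTerm_le (hs : 0 ≤ s) (ha0 : 0 ≤ a) (ha1 : a ≤ 1) (k : ℕ) :
    weightedExpTerm a s k ≤ expTerm s k + expTerm s (k + 1) := by
  calc weightedExpTerm a s k ≤ expTerm s k * (1 + s / (k + 1)) :=
        mul_le_mul_of_nonneg_left (rpow_le_one_add (by positivity) ha0 ha1)
          (expTerm_nonneg hs k)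
    _ = expTerm s k + expTerm s (k + 1) := by rw [mul_add, mul_one, expTerm_mul_div_succ]

lemma expTerm_le_weightedExpTerm (hs : 0 ≤ s) (ha0 : 0 ≤ a) {k : ℕ} (hk : (k : ℝ) + 1 ≤ s) :
    expTerm s k ≤ weightedExpTerm a s k := by
  have hx : 1 ≤ s / (k + 1) := (one_le_div (by positivity)).mpr hk
  exact le_mul_of_one_le_right (expTerm_nonneg hs k) (one_le_rpow hx ha0)

lemma expTerm_succ_le_weightedExpTerm (hs : 0 ≤ s) (ha1 : a ≤ 1) {k : ℕ}
    (hk : s ≤ (k : ℝ) + 1) : expTerm s (k + 1) ≤ weightedExpTerm a s k := by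
  have hx : s / (k + 1) ≤ 1 := (div_le_one (by positivity)).mpr hk
  rw [← expTerm_mul_div_succ]
  exact mul_le_mul_of_nonneg_left (self_le_rpow_of_le_one (by positivity) hx ha1)
    (expTerm_nonneg hs k)

lemma summable_weightedExpTerm (hs : 0 ≤ s) (ha0 : 0 ≤ a) (ha1 : a ≤ 1) :
    Summable (weightedExpTerm a s) :=
  .of_nonneg_of_le (weightedExpTerm_nonneg hs) (weightedExpTerm_le hs ha0 ha1)
    ((hasSum_expTerm s).add (hasSum_expTerm_succ s)).summable

lemma tsum_weightedExpTerm_le (hs : 0 ≤ s) (ha0 : 0 ≤ a) (ha1 : a ≤ 1) :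
    ∑' k, weightedExpTerm a s k ≤ 2 * exp s := by
  have h := hasSum_le (weightedExpTerm_le hs ha0 ha1)
    (summable_weightedExpTerm hs ha0 ha1).hasSum ((hasSum_expTerm s).add (hasSum_expTerm_succ s))
  linarith

lemma exp_sub_expTerm_le_tsum_weightedExpTerm (hs : 0 ≤ s) (ha0 : 0 ≤ a) (ha1 : a ≤ 1)
    {m : ℕ} (hms : (m : ℝ) ≤ s) (hsm : s ≤ m + 1) :
    exp s - expTerm s m ≤ ∑' k, weightedExpTerm a s k := by
  have hhead : ∑ k ∈ range m, expTerm s k ≤ ∑ k ∈ range m, weightedExpTerm a s k := by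
    refine sum_le_sum fun k hk ↦ expTerm_le_weightedExpTerm hs ha0 ?_
    have : (k : ℝ) + 1 ≤ m := by exact_mod_cast mem_range.mp hk
    linarith
  have htail : ∑' i, expTerm s (i + (m + 1)) ≤ ∑' i, weightedExpTerm a s (i + m) := by
    refine Summable.tsum_le_tsum (fun i ↦ ?_)
      ((summable_nat_add_iff _).mpr (hasSum_expTerm s).summable)
      ((summable_nat_add_iff _).mpr (summable_weightedExpTerm hs ha0 ha1))
    rw [← add_assoc]
    refine expTerm_succ_le_weightedExpTerm hs ha1 ?_
    push_cast
    linarith [(i.cast_nonneg : (0 : ℝ) ≤ i)]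
  have hE := (hasSum_expTerm s).summable.sum_add_tsum_nat_add (m + 1)
  have hW := (summable_weightedExpTerm hs ha0 ha1).sum_add_tsum_nat_add m
  rw [(hasSum_expTerm s).tsum_eq, sum_range_succ] at hE
  linarith

end

theorem f_a_estimate (a s : ℝ) (ha0 : 0 ≤ a) (ha1 : a < 1) (hs : 1 ≤ s) :
    Real.exp s * (1 - 2 / Real.exp 1) ≤
      (∑' k : ℕ, s ^ k / (Nat.factorial k : ℝ) * (s / ((k : ℝ) + 1)) ^ a) ∧
    (∑' k : ℕ, s ^ k / (Nat.factorial k : ℝ) * (s / ((k : ℝ) + 1)) ^ a) ≤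
      2 * Real.exp s := by
  change _ ≤ ∑' k, weightedExpTerm a s k ∧ ∑' k, weightedExpTerm a s k ≤ _
  have hs0 : 0 ≤ s := zero_le_one.trans hs
  refine ⟨?_, tsum_weightedExpTerm_le hs0 ha0 ha1.le⟩
  have hfloor : (⌊s⌋₊ : ℝ) ≤ s := floor_le hs0
  have hlower := exp_sub_expTerm_le_tsum_weightedExpTerm hs0 ha0 ha1.le hfloor
    (lt_floor_add_one s).le
  have hmax := expTerm_le_two_thirds_exp hs0 (m := ⌊s⌋₊) (by linarith)
  have hcoef : 2 / 3 ≤ 2 / exp 1 :=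
    div_le_div_of_nonneg_left zero_le_two (exp_pos 1) (by linarith [exp_one_lt_d9])
  linarith [mul_le_mul_of_nonneg_left hcoef (exp_pos s).le]
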